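/- arXiv:1705.10102 — 5 statements merged into one kernel-verified Lean document; each statement's English description precedes it below -/
import Mathlib

section
/- Let A ∈ ℝ^{n×d} have rank r and thin SVD A = UΣVᵀ, and let 1 ≤ k < d. Fix integers 1 ≤ m ≤ q ≤ r and a diagonal matrix Σ̃ = diag(d₁,…,d_q,0,…,0) ∈ ℝ^{r×r} with d₁ ≥ d₂ ≥ … ≥ d_q > 0. Let X ∈ ℝ^{d×(d−k)} satisfy XᵀX = I_{d−k}, let ε ≥ 0, and suppose the matrix W ∈ ℝ^{s×n} satisfies the four conditions: (i) ‖Σ̃Uᵀ WᵀW UΣ̃ − Σ̃²‖₂ ≤ ε; (ii) ‖Σ̃Uᵀ WᵀW A_{m,⊥} − Σ̃Uᵀ A_{m,⊥}‖_F ≤ ε‖AX‖_F; (iii) ‖A_{m,⊥}ᵀ WᵀW A_{m,⊥} − A_{m,⊥}ᵀ A_{m,⊥}‖_F ≤ (ε/√k)‖AX‖_F²; (iv) |‖W A_{m,⊥}‖_F² − ‖A_{m,⊥}‖_F²| ≤ ε‖AX‖_F². Then |‖WAX‖_F² − ‖AX‖_F²| ≤ (d_m⁻² + 2 d_m⁻¹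 + 2) ε ‖AX‖_F². -/
/-
Split A = A_m + A_{m,⊥}. As A_mᵀ A_{m,⊥} = 0, the error ‖WAX‖² − ‖AX‖² is the error for A_m X,
plus twice the cross term ⟨W A_m X, W A_{m,⊥} X⟩, plus the error for A_{m,⊥} X.
Factor A_m X = U Σ̃ Y with Y = Σ̃⁺ Σ_m Vᵀ X, so that ‖Y‖_F ≤ d_m⁻¹ ‖A_m X‖_F ≤ d_m⁻¹ ‖AX‖_F.
The first error is then the quadratic form of the matrix in (i) evaluated at Y. In the cross term
one may subtract ⟨U Σ̃ Y, A_{m,⊥} X⟩ = 0, which leaves ⟨Y, (Σ̃UᵀWᵀW A_{m,⊥} − Σ̃Uᵀ A_{m,⊥}) X⟩,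
controlled by (ii). The last error is tr(Xᵀ E X) for E = A_{m,⊥}ᵀWᵀW A_{m,⊥} − A_{m,⊥}ᵀ A_{m,⊥};
it differs from tr E, bounded by (iv), by tr(E (I − XXᵀ)) ≤ ‖E‖_F √k, bounded by (iii).
-/

open Matrix BigOperators

noncomputable def frobNorm {m n : Type*} [Fintype m] [Fintype n]
    (A : Matrix m n ℝ) : ℝ := Real.sqrt (∑ i, ∑ j, (A i j) ^ 2)

noncomputable def specNorm {m n : ℕ} (A : Matrix (Fin m) (Fin n) ℝ) : ℝ :=
  ‖LinearMap.toContinuousLinearMap (Matrix.toEuclideanLin A)‖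

noncomputable def truncDiag {r : ℕ} (σ : Fin r → ℝ) (m : ℕ) :
    Matrix (Fin r) (Fin r) ℝ :=
  Matrix.diagonal fun i => if (i : ℕ) < m then σ i else 0

noncomputable def samplingMatrix {n : ℕ} (p : Fin n → ℝ) (s : ℕ) (ω : Fin s → Fin n) :
    Matrix (Fin s) (Fin n) ℝ :=
  fun i j => if j = ω i then 1 / Real.sqrt (s * p j) else 0

noncomputable def expec {n s : ℕ} (p : Fin n → ℝ) (f : (Fin s → Fin n) → ℝ) : ℝ :=
  ∑ ω : Fin s → Fin n, (∏ i, p (ω i)) * f ω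

open Classical in
noncomputable def probOf {n s : ℕ} (p : Fin n → ℝ) (E : (Fin s → Fin n) → Prop) : ℝ :=
  ∑ ω : Fin s → Fin n, if E ω then (∏ i, p (ω i)) else 0

def firstCols {n r : ℕ} (U : Matrix (Fin n) (Fin r) ℝ) (k : ℕ) (h : k ≤ r) :
    Matrix (Fin n) (Fin k) ℝ :=
  fun i j => U i (Fin.castLE h j)

noncomputable def ridgeDiag {r : ℕ} (σ : Fin r → ℝ) (lam : ℝ) :
    Matrix (Fin r) (Fin r) ℝ :=
  Matrix.diagonal fun i => σ i / Real.sqrt (σ i ^ 2 + lam)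

lemma transpose_one_sub_mul_transpose {β γ : Type*} [Fintype γ] [DecidableEq β]
    (X : Matrix β γ ℝ) : (1 - X * Xᵀ)ᵀ = 1 - X * Xᵀ := by
  rw [transpose_sub, transpose_one, transpose_mul, transpose_transpose]

section Frobenius

variable {α β γ : Type*} [Fintype α] [Fintype β] [Fintype γ]

lemma frobNorm_nonneg (A : Matrix α β ℝ) : 0 ≤ frobNorm A := Real.sqrt_nonneg _

lemma frobNorm_sq (A : Matrix α β ℝ) : frobNorm A ^ 2 = trace (Aᵀ * A) := by
  rw [frobNorm, Real.sq_sqrt (by positivity)]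
  simp only [trace, diag, mul_apply, transpose_apply, sq]
  exact Finset.sum_comm

lemma frobNorm_neg (A : Matrix α β ℝ) : frobNorm (-A) = frobNorm A := by
  simp [frobNorm]

lemma trace_transpose_mul_le (A B : Matrix α β ℝ) :
    trace (Aᵀ * B) ≤ frobNorm A * frobNorm B := by
  have h := Real.sum_mul_le_sqrt_mul_sqrt Finset.univ
    (fun p : α × β => A p.1 p.2) (fun p => B p.1 p.2)
  simp only [Fintype.sum_prod_type] at h
  simpa only [trace, diag, mul_apply, transpose_apply, frobNorm, Finset.sum_comm (γ := β)] using h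

lemma abs_trace_transpose_mul_le (A B : Matrix α β ℝ) :
    |trace (Aᵀ * B)| ≤ frobNorm A * frobNorm B := by
  refine abs_le.2 ⟨?_, trace_transpose_mul_le A B⟩
  have h := trace_transpose_mul_le (-A) B
  rw [transpose_neg, Matrix.neg_mul, trace_neg, frobNorm_neg] at h
  linarith

lemma frobNorm_add_sq (P Q : Matrix α β ℝ) :
    frobNorm (P + Q) ^ 2 = frobNorm P ^ 2 + 2 * trace (Pᵀ * Q) + frobNorm Q ^ 2 := by
  have h : trace (Qᵀ * P) = trace (Pᵀ * Q) := by
    rw [← trace_transpose, transpose_mul, transpose_transpose]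
  simp only [frobNorm_sq, transpose_add, Matrix.add_mul, Matrix.mul_add, trace_add, h]
  ring

lemma frobNorm_mul_of_transpose_mul_self [DecidableEq β] {U : Matrix α β ℝ}
    (hU : Uᵀ * U = 1) (Z : Matrix β γ ℝ) : frobNorm (U * Z) = frobNorm Z := by
  refine (sq_eq_sq₀ (frobNorm_nonneg _) (frobNorm_nonneg _)).1 ?_
  rw [frobNorm_sq, frobNorm_sq, transpose_mul, Matrix.mul_assoc, ← Matrix.mul_assoc Uᵀ, hU,
    Matrix.one_mul]

variable [DecidableEq β] [DecidableEq γ] {X : Matrix β γ ℝ}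

lemma one_sub_mul_transpose_mul_self (hX : Xᵀ * X = 1) :
    (1 - X * Xᵀ) * (1 - X * Xᵀ) = 1 - X * Xᵀ := by
  have hP : X * Xᵀ * (X * Xᵀ) = X * Xᵀ := by
    rw [Matrix.mul_assoc, ← Matrix.mul_assoc Xᵀ, hX, Matrix.one_mul]
  rw [sub_mul, mul_sub, mul_sub, Matrix.one_mul, Matrix.mul_one, Matrix.one_mul, hP]
  abel

lemma frobNorm_one_sub_mul_transpose_sq (hX : Xᵀ * X = 1) :
    frobNorm (1 - X * Xᵀ) ^ 2 = Fintype.card β - Fintype.card γ := by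
  rw [frobNorm_sq, transpose_one_sub_mul_transpose, one_sub_mul_transpose_mul_self hX, trace_sub,
    trace_one, trace_mul_comm, hX, trace_one]

lemma frobNorm_mul_le_of_transpose_mul_self (hX : Xᵀ * X = 1) (M : Matrix α β ℝ) :
    frobNorm (M * X) ≤ frobNorm M := by
  have hX' : frobNorm (M * X) ^ 2 = trace (Mᵀ * M * (X * Xᵀ)) := by
    rw [frobNorm_sq, transpose_mul, Matrix.mul_assoc, trace_mul_comm Xᵀ]
    simp only [Matrix.mul_assoc]
  have hcompl : frobNorm (M * (1 - X * Xᵀ)) ^ 2 = trace (Mᵀ * M * (1 - X * Xᵀ)) := by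
    rw [frobNorm_sq, transpose_mul, transpose_one_sub_mul_transpose, Matrix.mul_assoc,
      trace_mul_comm (1 - X * Xᵀ)]
    simp only [Matrix.mul_assoc]
    rw [one_sub_mul_transpose_mul_self hX]
  have hsplit : frobNorm M ^ 2 = frobNorm (M * X) ^ 2 + frobNorm (M * (1 - X * Xᵀ)) ^ 2 := by
    rw [hX', hcompl, Matrix.mul_sub, Matrix.mul_one, trace_sub, frobNorm_sq]
    ring
  exact pow_le_pow_iff_left₀ (frobNorm_nonneg _) (frobNorm_nonneg _) two_ne_zero |>.1
    (by nlinarith [sq_nonneg (frobNorm (M * (1 - X * Xᵀ)))])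

lemma abs_trace_conj_sub_trace_le (hX : Xᵀ * X = 1) (M : Matrix β β ℝ) :
    |trace (Xᵀ * M * X) - trace M| ≤ frobNorm M * √(Fintype.card β - Fintype.card γ) := by
  have h : trace (Xᵀ * M * X) - trace M = -trace ((1 - X * Xᵀ)ᵀ * M) := by
    rw [transpose_one_sub_mul_transpose, Matrix.sub_mul, Matrix.one_mul, trace_sub,
      trace_mul_comm, Matrix.mul_assoc, trace_mul_comm, Matrix.mul_assoc]
    ring
  rw [h, abs_neg, ← frobNorm_one_sub_mul_transpose_sq hX, Real.sqrt_sq (frobNorm_nonneg _),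
    mul_comm]
  exact abs_trace_transpose_mul_le _ _

end Frobenius

lemma abs_dotProduct_mulVec_le {r : ℕ} (M : Matrix (Fin r) (Fin r) ℝ) (y : Fin r → ℝ) :
    |y ⬝ᵥ (M *ᵥ y)| ≤ specNorm M * (y ⬝ᵥ y) := by
  set v : EuclideanSpace ℝ (Fin r) := WithLp.toLp 2 y
  have hinner : inner ℝ v (toEuclideanLin M v) = y ⬝ᵥ (M *ᵥ y) := by
    simp [v, EuclideanSpace.inner_eq_star_dotProduct, dotProduct_comm]
  have hnorm : ‖v‖ ^ 2 = y ⬝ᵥ y := by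
    rw [← real_inner_self_eq_norm_sq, EuclideanSpace.inner_eq_star_dotProduct]
    simp [v]
  have hop : ‖toEuclideanLin M v‖ ≤ specNorm M * ‖v‖ :=
    (LinearMap.toContinuousLinearMap (toEuclideanLin M)).le_opNorm v
  calc |y ⬝ᵥ (M *ᵥ y)| = |inner ℝ v (toEuclideanLin M v)| := by rw [hinner]
    _ ≤ ‖v‖ * ‖toEuclideanLin M v‖ := abs_real_inner_le_norm _ _
    _ ≤ ‖v‖ * (specNorm M * ‖v‖) := by gcongr
    _ = specNorm M * (y ⬝ᵥ y) := by rw [← hnorm]; ring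

lemma abs_trace_transpose_mul_mul_le {r : ℕ} {γ : Type*} [Fintype γ]
    (M : Matrix (Fin r) (Fin r) ℝ) (Y : Matrix (Fin r) γ ℝ) :
    |trace (Yᵀ * M * Y)| ≤ specNorm M * frobNorm Y ^ 2 := by
  have hcol : ∀ Z : Matrix (Fin r) (Fin r) ℝ,
      trace (Yᵀ * Z * Y) = ∑ j, (fun i => Y i j) ⬝ᵥ (Z *ᵥ fun i => Y i j) := by
    intro Z
    simp only [trace, diag, mul_apply, transpose_apply, dotProduct, mulVec, Finset.sum_mul,
      Finset.mul_sum]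
    refine Finset.sum_congr rfl fun j _ => ?_
    rw [Finset.sum_comm]
    exact Finset.sum_congr rfl fun _ _ => Finset.sum_congr rfl fun _ _ => by ring
  have hY := hcol 1
  rw [Matrix.mul_one] at hY
  rw [frobNorm_sq, hY, hcol, Finset.mul_sum]
  refine (Finset.abs_sum_le_sum_abs _ _).trans (Finset.sum_le_sum fun j _ => ?_)
  simpa only [one_mulVec] using abs_dotProduct_mulVec_le M _

section Perturbation

variable {ι α β γ κ : Type*} [Fintype ι] [Fintype α] [Fintype β] [Fintype γ] [Fintype κ]

lemma frobNorm_add_mul_sq {A₁ A₂ : Matrix α β ℝ} (h : A₁ᵀ * A₂ = 0) (X : Matrix β γ ℝ) :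
    frobNorm ((A₁ + A₂) * X) ^ 2 = frobNorm (A₁ * X) ^ 2 + frobNorm (A₂ * X) ^ 2 := by
  have hcross : trace ((A₁ * X)ᵀ * (A₂ * X)) = 0 := by
    rw [transpose_mul, Matrix.mul_assoc, ← Matrix.mul_assoc A₁ᵀ, h, Matrix.zero_mul,
      Matrix.mul_zero, trace_zero]
  rw [Matrix.add_mul, frobNorm_add_sq, hcross]
  ring

lemma frobNorm_mul_le_frobNorm_add_mul {A₁ A₂ : Matrix α β ℝ} (h : A₁ᵀ * A₂ = 0)
    (X : Matrix β γ ℝ) : frobNorm (A₁ * X) ≤ frobNorm ((A₁ + A₂) * X) := by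
  refine (pow_le_pow_iff_left₀ (frobNorm_nonneg _) (frobNorm_nonneg _) two_ne_zero).1 ?_
  rw [frobNorm_add_mul_sq h]
  exact le_add_of_nonneg_right (sq_nonneg _)

lemma frobNorm_mul_add_mul_sq_sub {A₁ A₂ : Matrix α β ℝ} (h : A₁ᵀ * A₂ = 0)
    (W : Matrix ι α ℝ) (X : Matrix β γ ℝ) :
    frobNorm (W * (A₁ + A₂) * X) ^ 2 - frobNorm ((A₁ + A₂) * X) ^ 2
      = (frobNorm (W * A₁ * X) ^ 2 - frobNorm (A₁ * X) ^ 2)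
        + 2 * trace ((W * A₁ * X)ᵀ * (W * A₂ * X))
        + (frobNorm (W * A₂ * X) ^ 2 - frobNorm (A₂ * X) ^ 2) := by
  rw [frobNorm_add_mul_sq h, Matrix.mul_add, Matrix.add_mul, frobNorm_add_sq]
  ring

lemma frobNorm_mul_sq_sub_eq_trace [DecidableEq κ] {U : Matrix α κ ℝ} (hU : Uᵀ * U = 1)
    (W : Matrix ι α ℝ) (D : Matrix κ κ ℝ) {A : Matrix α β ℝ} {X : Matrix β γ ℝ}
    {Y : Matrix κ γ ℝ} (hAX : A * X = U * D * Y) :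
    frobNorm (W * A * X) ^ 2 - frobNorm (A * X) ^ 2
      = trace (Yᵀ * (Dᵀ * Uᵀ * Wᵀ * W * U * D - Dᵀ * D) * Y) := by
  rw [Matrix.mul_assoc W, hAX, frobNorm_sq, frobNorm_sq, ← trace_sub]
  congr 1
  simp only [transpose_mul, Matrix.mul_sub, Matrix.sub_mul, Matrix.mul_assoc]
  rw [← Matrix.mul_assoc Uᵀ U, hU, Matrix.one_mul]

lemma trace_transpose_mul_eq_of_factor {A₁ A₂ : Matrix α β ℝ} (h : A₁ᵀ * A₂ = 0)
    (W : Matrix ι α ℝ) (U : Matrix α κ ℝ) (D : Matrix κ κ ℝ) {X : Matrix β γ ℝ} {Y : Matrix κ γ ℝ}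
    (hAX : A₁ * X = U * D * Y) :
    trace ((W * A₁ * X)ᵀ * (W * A₂ * X))
      = trace (Yᵀ * ((Dᵀ * Uᵀ * Wᵀ * W * A₂ - Dᵀ * Uᵀ * A₂) * X)) := by
  have hvanish : Yᵀ * (Dᵀ * Uᵀ * A₂ * X) = 0 := by
    have : (A₁ * X)ᵀ * (A₂ * X) = 0 := by
      rw [transpose_mul, Matrix.mul_assoc, ← Matrix.mul_assoc A₁ᵀ, h, Matrix.zero_mul,
        Matrix.mul_zero]
    rw [hAX] at this
    simpa only [transpose_mul, Matrix.mul_assoc] using this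
  rw [Matrix.sub_mul, Matrix.mul_sub, hvanish, sub_zero, Matrix.mul_assoc W, hAX]
  simp only [transpose_mul, Matrix.mul_assoc]

lemma abs_frobNorm_mul_sq_sub_le [DecidableEq β] [DecidableEq γ] {X : Matrix β γ ℝ}
    (hX : Xᵀ * X = 1) (W : Matrix ι α ℝ) (A : Matrix α β ℝ) :
    |frobNorm (W * A * X) ^ 2 - frobNorm (A * X) ^ 2|
      ≤ |frobNorm (W * A) ^ 2 - frobNorm A ^ 2|
        + frobNorm (Aᵀ * Wᵀ * W * A - Aᵀ * A) * √(Fintype.card β - Fintype.card γ) := by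
  set E := Aᵀ * Wᵀ * W * A - Aᵀ * A
  have hconj : frobNorm (W * A * X) ^ 2 - frobNorm (A * X) ^ 2 = trace (Xᵀ * E * X) := by
    rw [frobNorm_sq, frobNorm_sq, ← trace_sub]
    simp only [E, transpose_mul, Matrix.mul_sub, Matrix.sub_mul, Matrix.mul_assoc]
  have htrace : frobNorm (W * A) ^ 2 - frobNorm A ^ 2 = trace E := by
    rw [frobNorm_sq, frobNorm_sq, ← trace_sub]
    simp only [E, transpose_mul, Matrix.mul_assoc]
  rw [hconj, htrace]
  calc |trace (Xᵀ * E * X)| ≤ |trace E| + |trace (Xᵀ * E * X) - trace E| := by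
        simpa using abs_add_le (trace E) (trace (Xᵀ * E * X) - trace E)
    _ ≤ _ := by gcongr; exact abs_trace_conj_sub_trace_le hX E

lemma abs_frobNorm_mul_sq_sub_le_of_split [DecidableEq β] [DecidableEq γ] {r : ℕ}
    {A₁ A₂ : Matrix α β ℝ} (h : A₁ᵀ * A₂ = 0) {U : Matrix α (Fin r) ℝ} (hU : Uᵀ * U = 1)
    {X : Matrix β γ ℝ} (hX : Xᵀ * X = 1) {D : Matrix (Fin r) (Fin r) ℝ}
    {Y : Matrix (Fin r) γ ℝ} (hAX : A₁ * X = U * D * Y) (W : Matrix ι α ℝ) :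
    |frobNorm (W * (A₁ + A₂) * X) ^ 2 - frobNorm ((A₁ + A₂) * X) ^ 2|
      ≤ specNorm (Dᵀ * Uᵀ * Wᵀ * W * U * D - Dᵀ * D) * frobNorm Y ^ 2
        + 2 * (frobNorm Y * frobNorm (Dᵀ * Uᵀ * Wᵀ * W * A₂ - Dᵀ * Uᵀ * A₂))
        + (|frobNorm (W * A₂) ^ 2 - frobNorm A₂ ^ 2|
          + frobNorm (A₂ᵀ * Wᵀ * W * A₂ - A₂ᵀ * A₂) * √(Fintype.card β - Fintype.card γ)) := by
  rw [frobNorm_mul_add_mul_sq_sub h]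
  refine (abs_add_three _ _ _).trans ?_
  rw [abs_mul, abs_two, frobNorm_mul_sq_sub_eq_trace hU W D hAX,
    trace_transpose_mul_eq_of_factor h W U D hAX]
  gcongr
  · exact abs_trace_transpose_mul_mul_le _ Y
  · exact (abs_trace_transpose_mul_le _ _).trans <| mul_le_mul_of_nonneg_left
      (frobNorm_mul_le_of_transpose_mul_self hX _) (frobNorm_nonneg Y)
  · exact abs_frobNorm_mul_sq_sub_le hX W A₂

end Perturbation

lemma transpose_mul_eq_zero_of_orthonormal {α β κ : Type*} [Fintype α] [Fintype κ]
    [DecidableEq κ] {U : Matrix α κ ℝ} (hU : Uᵀ * U = 1) (V : Matrix β κ ℝ)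
    {S T : Matrix κ κ ℝ} (h : Sᵀ * T = 0) :
    (U * S * Vᵀ)ᵀ * (U * T * Vᵀ) = 0 := by
  simp only [transpose_mul, Matrix.mul_assoc]
  rw [← Matrix.mul_assoc Uᵀ U, hU, Matrix.one_mul, ← Matrix.mul_assoc Sᵀ, h, Matrix.zero_mul,
    Matrix.mul_zero]

section TruncDiag

variable {r : ℕ} (σ : Fin r → ℝ)

lemma truncDiag_transpose_mul_sub (m : ℕ) :
    (truncDiag σ m)ᵀ * (diagonal σ - truncDiag σ m) = 0 := by
  ext i j
  by_cases hij : i = j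
  · subst hij
    by_cases hi : (i : ℕ) < m <;> simp [truncDiag, hi]
  · simp [truncDiag, hij]

lemma transpose_mul_sub_truncSVD_eq_zero {n d : ℕ} {A : Matrix (Fin n) (Fin d) ℝ}
    {U : Matrix (Fin n) (Fin r) ℝ} (hU : Uᵀ * U = 1) {V : Matrix (Fin d) (Fin r) ℝ}
    (hA : A = U * diagonal σ * Vᵀ) (m : ℕ) :
    (U * truncDiag σ m * Vᵀ)ᵀ * (A - U * truncDiag σ m * Vᵀ) = 0 := by
  rw [hA, ← Matrix.sub_mul, ← Matrix.mul_sub]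
  exact transpose_mul_eq_zero_of_orthonormal hU V (truncDiag_transpose_mul_sub σ m)

lemma truncDiag_eq_diagonal_mul {m : ℕ} {d : Fin r → ℝ} (hd : ∀ i : Fin r, (i : ℕ) < m → d i ≠ 0) :
    truncDiag σ m = diagonal d * truncDiag (fun i => σ i / d i) m := by
  rw [truncDiag, truncDiag, diagonal_mul_diagonal]
  congr 1
  ext i
  split_ifs with hi
  · rw [mul_div_cancel₀ _ (hd i hi)]
  · rw [mul_zero]

lemma frobNorm_truncDiag_div_mul_le {γ : Type*} [Fintype γ] {m : ℕ} {d : Fin r → ℝ} {c : ℝ}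
    (hc : 0 < c) (hd : ∀ i : Fin r, (i : ℕ) < m → c ≤ d i) (M : Matrix (Fin r) γ ℝ) :
    frobNorm (truncDiag (fun i => σ i / d i) m * M) ≤ c⁻¹ * frobNorm (truncDiag σ m * M) := by
  have hentry : ∀ i j, ((truncDiag (fun i => σ i / d i) m * M) i j) ^ 2
      ≤ c⁻¹ ^ 2 * ((truncDiag σ m * M) i j) ^ 2 := by
    intro i j
    simp only [truncDiag, diagonal_mul]
    split_ifs with hi
    · have hdi : 0 < d i := hc.trans_le (hd i hi)
      rw [← mul_pow, sq_le_sq, abs_mul, abs_mul, abs_mul, abs_div, abs_of_pos hdi,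
        abs_of_pos (inv_pos.2 hc)]
      calc |σ i| / d i * |M i j| = (d i)⁻¹ * (|σ i| * |M i j|) := by ring
        _ ≤ c⁻¹ * (|σ i| * |M i j|) := by gcongr; exact hd i hi
    · simp
  rw [frobNorm, frobNorm, ← Real.sqrt_sq (inv_nonneg.2 hc.le), ← Real.sqrt_mul (by positivity),
    Finset.mul_sum]
  refine Real.sqrt_le_sqrt (Finset.sum_le_sum fun i _ => ?_)
  rw [Finset.mul_sum]
  exact Finset.sum_le_sum fun j _ => hentry i j

end TruncDiag

/-- structural theorem for projection-cost preservation. -/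
theorem stmt_0 {n d s r : ℕ} {k m q : ℕ}
    (A : Matrix (Fin n) (Fin d) ℝ)
    (U : Matrix (Fin n) (Fin r) ℝ) (V : Matrix (Fin d) (Fin r) ℝ) (σ : Fin r → ℝ)
    (hU : Uᵀ * U = 1)
    (hA : A = U * Matrix.diagonal σ * Vᵀ)
    (hk1 : 1 ≤ k) (hkd : k < d)
    (hm1 : 1 ≤ m) (hmq : m ≤ q) (hqr : q ≤ r)
    (dd : Fin r → ℝ)
    (hdd_dec : ∀ i j : Fin r, i ≤ j → dd j ≤ dd i)
    (hdd_pos : ∀ i : Fin r, (i : ℕ) < q → 0 < dd i)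
    (X : Matrix (Fin d) (Fin (d - k)) ℝ) (hX : Xᵀ * X = 1)
    (ε : ℝ) (hε : 0 ≤ ε)
    (W : Matrix (Fin s) (Fin n) ℝ)
    (h1 : specNorm (Matrix.diagonal dd * Uᵀ * Wᵀ * W * U * Matrix.diagonal dd
        - Matrix.diagonal dd * Matrix.diagonal dd) ≤ ε)
    (h2 : frobNorm (Matrix.diagonal dd * Uᵀ * Wᵀ * W * (A - U * truncDiag σ m * Vᵀ)
        - Matrix.diagonal dd * Uᵀ * (A - U * truncDiag σ m * Vᵀ)) ≤ ε * frobNorm (A * X))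
    (h3 : frobNorm ((A - U * truncDiag σ m * Vᵀ)ᵀ * Wᵀ * W * (A - U * truncDiag σ m * Vᵀ)
        - (A - U * truncDiag σ m * Vᵀ)ᵀ * (A - U * truncDiag σ m * Vᵀ))
        ≤ (ε / Real.sqrt k) * frobNorm (A * X) ^ 2)
    (h4 : |frobNorm (W * (A - U * truncDiag σ m * Vᵀ)) ^ 2
        - frobNorm (A - U * truncDiag σ m * Vᵀ) ^ 2| ≤ ε * frobNorm (A * X) ^ 2) :
    |frobNorm (W * A * X) ^ 2 - frobNorm (A * X) ^ 2|
      ≤ ((dd ⟨m - 1, by omega⟩)⁻¹ ^ 2 + 2 * (dd ⟨m - 1, by omega⟩)⁻¹ + 2)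
        * ε * frobNorm (A * X) ^ 2 := by
  set c := dd ⟨m - 1, by omega⟩
  have hc : 0 < c := hdd_pos _ (by simp only; omega)
  have hc_le : ∀ i : Fin r, (i : ℕ) < m → c ≤ dd i := fun i hi =>
    hdd_dec _ _ (Fin.le_def.2 (by simp only; omega))
  set A₁ := U * truncDiag σ m * Vᵀ
  have horth := transpose_mul_sub_truncSVD_eq_zero σ hU hA m
  set Y := truncDiag (fun i => σ i / dd i) m * (Vᵀ * X)
  have hfactor : A₁ * X = U * diagonal dd * Y := by
    simp only [A₁, Y, truncDiag_eq_diagonal_mul σ fun i hi => (hc.trans_le (hc_le i hi)).ne',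
      Matrix.mul_assoc]
  have hY : frobNorm Y ≤ c⁻¹ * frobNorm (A * X) := by
    have hA₁X := frobNorm_mul_le_frobNorm_add_mul horth X
    simp only [add_sub_cancel, Matrix.mul_assoc] at hA₁X
    refine (frobNorm_truncDiag_div_mul_le σ hc hc_le _).trans ?_
    rw [← frobNorm_mul_of_transpose_mul_self hU]
    gcongr
  have hcard : √(Fintype.card (Fin d) - Fintype.card (Fin (d - k)) : ℝ) = √k := by
    simp [Nat.cast_sub hkd.le]
  have hsplit := abs_frobNorm_mul_sq_sub_le_of_split horth hU hX hfactor W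
  rw [add_sub_cancel, diagonal_transpose, hcard] at hsplit
  have hk : (0 : ℝ) < √k := Real.sqrt_pos.2 (by exact_mod_cast hk1)
  set a := frobNorm (A * X)
  calc _ ≤ ε * (c⁻¹ * a) ^ 2 + 2 * (c⁻¹ * a * (ε * a)) + (ε * a ^ 2 + ε / √k * a ^ 2 * √k) := by
        refine hsplit.trans ?_
        gcongr
        exacts [frobNorm_nonneg Y, frobNorm_nonneg _,
          mul_nonneg (inv_nonneg.2 hc.le) (frobNorm_nonneg _)]
    _ = _ := by field_simp; ring
end

section
/- Let A ∈ ℝ^{n×d} have rank r and thin SVD A = UΣVᵀ, let 1 ≤ k < d, fix 1 ≤ m ≤ r, and let X ∈ ℝ^{d×(d−k)} satisfy XᵀX = I_{d−k}. Suppose W ∈ ℝ^{s×n} satisfies both ‖A_{m,⊥}ᵀ WᵀW A_{m,⊥} − A_{m,⊥}ᵀ A_{m,⊥}‖_F ≤ (ε/√k)‖AX‖_F² and |‖W A_{m,⊥}‖_F² − ‖A_{m,⊥}‖_F²| ≤ ε‖AX‖_F². Then |tr(Xᵀ A_{m,⊥}ᵀ (WᵀW − I_n) A_{m,⊥} X)|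 ≤ 2 ε ‖AX‖_F². -/
open Matrix BigOperators

lemma frob_sq {m n : Type*} [Fintype m] [Fintype n] (B : Matrix m n ℝ) :
    frobNorm B ^ 2 = Matrix.trace (Bᵀ * B) := by
  unfold frobNorm
  rw [Real.sq_sqrt (by positivity)]
  simp only [Matrix.trace, Matrix.diag, Matrix.mul_apply, Matrix.transpose_apply, sq]
  exact Finset.sum_comm

lemma frob_nonneg {m n : Type*} [Fintype m] [Fintype n] (B : Matrix m n ℝ) :
    0 ≤ frobNorm B := Real.sqrt_nonneg _

lemma trace_cs {m : Type*} [Fintype m] (M P : Matrix m m ℝ) (hP : Pᵀ = P) :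
    |Matrix.trace (M * P)| ≤ frobNorm M * frobNorm P := by
  have ht : Matrix.trace (M * P) = ∑ p : m × m, M p.1 p.2 * P p.1 p.2 := by
    rw [Fintype.sum_prod_type]
    simp only [Matrix.trace, Matrix.diag, Matrix.mul_apply]
    refine Finset.sum_congr rfl fun i _ => Finset.sum_congr rfl fun j _ => ?_
    rw [show P j i = P i j from congrFun (congrFun hP i) j]
  have hM : frobNorm M = Real.sqrt (∑ p : m × m, M p.1 p.2 ^ 2) := by
    unfold frobNorm; rw [Fintype.sum_prod_type]
  have hPn : frobNorm P = Real.sqrt (∑ p : m × m, P p.1 p.2 ^ 2) := by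
    unfold frobNorm; rw [Fintype.sum_prod_type]
  rw [ht, hM, hPn, ← Real.sqrt_mul (by positivity)]
  have h2 := Finset.sum_mul_sq_le_sq_mul_sq Finset.univ (fun p : m × m => M p.1 p.2)
    (fun p : m × m => P p.1 p.2)
  calc |∑ p : m × m, M p.1 p.2 * P p.1 p.2|
      = Real.sqrt ((∑ p : m × m, M p.1 p.2 * P p.1 p.2) ^ 2) := by
        rw [Real.sqrt_sq_eq_abs]
    _ ≤ _ := Real.sqrt_le_sqrt h2

/-- bounding the term Δ₂. -/
theorem stmt_2 {n d s r : ℕ} {k m : ℕ}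
    (A : Matrix (Fin n) (Fin d) ℝ)
    (U : Matrix (Fin n) (Fin r) ℝ) (V : Matrix (Fin d) (Fin r) ℝ) (σ : Fin r → ℝ)
    (hU : Uᵀ * U = 1) (hV : Vᵀ * V = 1)
    (hσdec : ∀ i j : Fin r, i ≤ j → σ j ≤ σ i) (hσpos : ∀ i, 0 < σ i)
    (hA : A = U * Matrix.diagonal σ * Vᵀ) (hr : A.rank = r)
    (hk1 : 1 ≤ k) (hkd : k < d)
    (hm1 : 1 ≤ m) (hmr : m ≤ r)
    (X : Matrix (Fin d) (Fin (d - k)) ℝ) (hX : Xᵀ * X = 1)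
    (ε : ℝ)
    (W : Matrix (Fin s) (Fin n) ℝ)
    (h3 : frobNorm ((A - U * truncDiag σ m * Vᵀ)ᵀ * Wᵀ * W * (A - U * truncDiag σ m * Vᵀ)
        - (A - U * truncDiag σ m * Vᵀ)ᵀ * (A - U * truncDiag σ m * Vᵀ))
        ≤ (ε / Real.sqrt k) * frobNorm (A * X) ^ 2)
    (h4 : |frobNorm (W * (A - U * truncDiag σ m * Vᵀ)) ^ 2
        - frobNorm (A - U * truncDiag σ m * Vᵀ) ^ 2| ≤ ε * frobNorm (A * X) ^ 2) :
    |Matrix.trace (Xᵀ * (A - U * truncDiag σ m * Vᵀ)ᵀ * (Wᵀ * W - 1)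
        * (A - U * truncDiag σ m * Vᵀ) * X)| ≤ 2 * ε * frobNorm (A * X) ^ 2 := by
  set B : Matrix (Fin n) (Fin d) ℝ := A - U * truncDiag σ m * Vᵀ with hB
  set M : Matrix (Fin d) (Fin d) ℝ := Bᵀ * Wᵀ * W * B - Bᵀ * B with hMdef
  set P : Matrix (Fin d) (Fin d) ℝ := 1 - X * Xᵀ with hPdef
  set F : ℝ := frobNorm (A * X) ^ 2 with hF
  have hPsymm : Pᵀ = P := by
    rw [hPdef, Matrix.transpose_sub, Matrix.transpose_one, Matrix.transpose_mul,
      Matrix.transpose_transpose]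
  have hXXX : X * Xᵀ * (X * Xᵀ) = X * Xᵀ := by
    rw [Matrix.mul_assoc, ← Matrix.mul_assoc Xᵀ X Xᵀ, hX, Matrix.one_mul]
  have hPP : P * P = P := by
    rw [hPdef]
    simp only [Matrix.sub_mul, Matrix.mul_sub, Matrix.one_mul, Matrix.mul_one, hXXX]
    abel
  have htrP : Matrix.trace P = (k : ℝ) := by
    rw [hPdef, Matrix.trace_sub, Matrix.trace_one, Matrix.trace_mul_comm, hX,
      Matrix.trace_one]
    simp only [Fintype.card_fin]
    rw [Nat.cast_sub hkd.le]
    ring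
  have hfP : frobNorm P = Real.sqrt k := by
    have h1 : frobNorm P ^ 2 = (k : ℝ) := by rw [frob_sq, hPsymm, hPP, htrP]
    rw [← h1]
    exact (Real.sqrt_sq (frob_nonneg P)).symm
  have hC : Bᵀ * (Wᵀ * W - 1) * B = M := by
    rw [hMdef, Matrix.mul_sub Bᵀ (Wᵀ * W) 1, Matrix.mul_one, Matrix.sub_mul _ _ B]
    simp only [Matrix.mul_assoc]
  have h0 : Xᵀ * Bᵀ * (Wᵀ * W - 1) * B * X = Xᵀ * M * X := by
    rw [← hC]; simp only [Matrix.mul_assoc]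
  have hXP : X * Xᵀ = 1 - P := by rw [hPdef]; abel
  have e2 : Matrix.trace (Xᵀ * M * X) = Matrix.trace M - Matrix.trace (M * P) := by
    rw [Matrix.trace_mul_cycle, Matrix.trace_mul_comm, hXP, Matrix.mul_sub M 1 P,
      Matrix.mul_one, Matrix.trace_sub]
  have htrM : Matrix.trace M = frobNorm (W * B) ^ 2 - frobNorm B ^ 2 := by
    rw [frob_sq, frob_sq, hMdef, Matrix.trace_sub]
    congr 2
    rw [Matrix.transpose_mul]
    simp only [Matrix.mul_assoc]
  have b1 : |Matrix.trace M| ≤ ε * F := by rw [htrM]; exact h4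
  have b2 : |Matrix.trace (M * P)| ≤ frobNorm M * Real.sqrt k := by
    rw [← hfP]; exact trace_cs M P hPsymm
  have hk0 : (0 : ℝ) < Real.sqrt k :=
    Real.sqrt_pos.mpr (by exact_mod_cast Nat.lt_of_lt_of_le Nat.zero_lt_one hk1)
  have b2' : |Matrix.trace (M * P)| ≤ ε * F := by
    have h5 := mul_le_mul_of_nonneg_right h3 hk0.le
    have heq : ε / Real.sqrt k * F * Real.sqrt k = ε * F := by
      field_simp
    calc |Matrix.trace (M * P)| ≤ frobNorm M * Real.sqrt k := b2
      _ ≤ ε / Real.sqrt k * F * Real.sqrt k := h5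
      _ = ε * F := heq
  rw [h0, e2]
  calc |Matrix.trace M - Matrix.trace (M * P)|
      ≤ |Matrix.trace M| + |Matrix.trace (M * P)| := abs_sub _ _
    _ ≤ ε * F + ε * F := add_le_add b1 b2'
    _ = 2 * ε * F := by ring
end

section
/- Let A ∈ ℝ^{n×d} have rank r and thin SVD A = UΣVᵀ, let 1 ≤ k < d, fix integers 1 ≤ m ≤ q ≤ r and a diagonal matrix Σ̃ = diag(d₁,…,d_q,0,…,0) ∈ ℝ^{r×r} with d₁ ≥ … ≥ d_q > 0, and let X ∈ ℝ^{d×(d−k)} satisfy XᵀX = I_{d−k}. If W ∈ ℝ^{s×n} satisfies ‖Σ̃Uᵀ WᵀW A_{m,⊥} − Σ̃Uᵀ A_{m,⊥}‖_F ≤ ε‖AX‖_F, then |tr(Xᵀ V Σ_m Uᵀ (WᵀW − I_n) U Σ_{m,⊥} Vᵀ X)| ≤ d_m⁻¹ ε ‖AX‖_F². -/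
open Matrix BigOperators

/-! ### Auxiliary lemmas about the Frobenius norm -/

noncomputable def fro2 {m n : Type*} [Fintype m] [Fintype n]
    (A : Matrix m n ℝ) : ℝ := ∑ i, ∑ j, (A i j) ^ 2

lemma fro2_nonneg {m n : Type*} [Fintype m] [Fintype n] (A : Matrix m n ℝ) :
    0 ≤ fro2 A :=
  Finset.sum_nonneg fun _ _ => Finset.sum_nonneg fun _ _ => sq_nonneg _

lemma frobNorm_eq {m n : Type*} [Fintype m] [Fintype n] (A : Matrix m n ℝ) :
    frobNorm A = Real.sqrt (fro2 A) := rfl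

lemma frobNorm_nonneg_s3 {m n : Type*} [Fintype m] [Fintype n] (A : Matrix m n ℝ) :
    0 ≤ frobNorm A := Real.sqrt_nonneg _

lemma fro2_eq_trace {m n : Type*} [Fintype m] [Fintype n] (A : Matrix m n ℝ) :
    fro2 A = Matrix.trace (Aᵀ * A) := by
  simp only [fro2, Matrix.trace, Matrix.diag, Matrix.mul_apply, Matrix.transpose_apply, sq]
  rw [Finset.sum_comm]

lemma frobNorm_mono {m n : Type*} [Fintype m] [Fintype n] {A B : Matrix m n ℝ}
    (h : fro2 A ≤ fro2 B) : frobNorm A ≤ frobNorm B := Real.sqrt_le_sqrt h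

/-- Cauchy–Schwarz for the Frobenius inner product. -/
lemma abs_trace_le {m n : Type*} [Fintype m] [Fintype n] (A B : Matrix m n ℝ) :
    |Matrix.trace (Aᵀ * B)| ≤ frobNorm A * frobNorm B := by
  have h1 : Matrix.trace (Aᵀ * B) = ∑ p : m × n, A p.1 p.2 * B p.1 p.2 := by
    simp only [Matrix.trace, Matrix.diag, Matrix.mul_apply, Matrix.transpose_apply]
    rw [Finset.sum_comm, ← Finset.sum_product', Finset.univ_product_univ]
  have h2 := Finset.sum_mul_sq_le_sq_mul_sq Finset.univ
      (fun p : m × n => A p.1 p.2) (fun p : m × n => B p.1 p.2)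
  have hA : (∑ p : m × n, A p.1 p.2 ^ 2) = fro2 A := by
    rw [fro2, ← Finset.sum_product', Finset.univ_product_univ]
  have hB : (∑ p : m × n, B p.1 p.2 ^ 2) = fro2 B := by
    rw [fro2, ← Finset.sum_product', Finset.univ_product_univ]
  rw [hA, hB] at h2
  rw [h1, frobNorm_eq, frobNorm_eq, ← Real.sqrt_mul (fro2_nonneg A), ← Real.sqrt_sq_eq_abs]
  exact Real.sqrt_le_sqrt h2

lemma fro2_unitary_left {n r p : Type*} [Fintype n] [Fintype r] [Fintype p] [DecidableEq r]
    {U : Matrix n r ℝ} (hU : Uᵀ * U = 1) (M : Matrix r p ℝ) :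
    fro2 (U * M) = fro2 M := by
  rw [fro2_eq_trace, fro2_eq_trace, Matrix.transpose_mul, Matrix.mul_assoc,
    ← Matrix.mul_assoc Uᵀ, hU, Matrix.one_mul]

lemma fro2_mul_orthocol {a b c : Type*} [Fintype a] [Fintype b] [Fintype c] [DecidableEq c]
    [DecidableEq b]
    (E : Matrix a b ℝ) {X : Matrix b c ℝ} (hX : Xᵀ * X = 1) :
    fro2 (E * X) ≤ fro2 E := by
  set P : Matrix b b ℝ := X * Xᵀ with hPdef
  have hP : P * P = P := by
    rw [hPdef, Matrix.mul_assoc, ← Matrix.mul_assoc Xᵀ, hX, Matrix.one_mul]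
  have hPt : Pᵀ = P := by rw [hPdef, Matrix.transpose_mul, Matrix.transpose_transpose]
  have h1P : (1 - P) * (1 - P) = 1 - P := by
    rw [Matrix.mul_sub, Matrix.mul_one, Matrix.sub_mul, Matrix.one_mul, hP, sub_self, sub_zero]
  have e1 : fro2 (E * X) = Matrix.trace (Eᵀ * E * P) := by
    rw [fro2_eq_trace, Matrix.transpose_mul, Matrix.mul_assoc Xᵀ,
      ← Matrix.mul_assoc Eᵀ, Matrix.trace_mul_comm, Matrix.mul_assoc, hPdef]
  have e2 : fro2 (E * (1 - P)) = Matrix.trace (Eᵀ * E) - Matrix.trace (Eᵀ * E * P) := by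
    rw [fro2_eq_trace, Matrix.transpose_mul, Matrix.transpose_sub, Matrix.transpose_one, hPt,
      Matrix.mul_assoc (1 - P), ← Matrix.mul_assoc Eᵀ, Matrix.trace_mul_comm,
      Matrix.mul_assoc (Eᵀ * E), h1P, Matrix.mul_sub, Matrix.mul_one, Matrix.trace_sub]
  have e3 : fro2 E = Matrix.trace (Eᵀ * E) := fro2_eq_trace E
  have := fro2_nonneg (E * (1 - P))
  linarith

set_option maxHeartbeats 1000000 in
/-- bounding the term Δ₃. -/
theorem stmt_3 {n d s r : ℕ} {k m q : ℕ}
    (A : Matrix (Fin n) (Fin d) ℝ)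
    (U : Matrix (Fin n) (Fin r) ℝ) (V : Matrix (Fin d) (Fin r) ℝ) (σ : Fin r → ℝ)
    (hU : Uᵀ * U = 1) (hV : Vᵀ * V = 1)
    (hσdec : ∀ i j : Fin r, i ≤ j → σ j ≤ σ i) (hσpos : ∀ i, 0 < σ i)
    (hA : A = U * Matrix.diagonal σ * Vᵀ) (hr : A.rank = r)
    (hk1 : 1 ≤ k) (hkd : k < d)
    (hm1 : 1 ≤ m) (hmq : m ≤ q) (hqr : q ≤ r)
    (dd : Fin r → ℝ)
    (hdd_dec : ∀ i j : Fin r, i ≤ j → dd j ≤ dd i)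
    (hdd_pos : ∀ i : Fin r, (i : ℕ) < q → 0 < dd i)
    (hdd_zero : ∀ i : Fin r, q ≤ (i : ℕ) → dd i = 0)
    (X : Matrix (Fin d) (Fin (d - k)) ℝ) (hX : Xᵀ * X = 1)
    (ε : ℝ)
    (W : Matrix (Fin s) (Fin n) ℝ)
    (h2 : frobNorm (Matrix.diagonal dd * Uᵀ * Wᵀ * W * (A - U * truncDiag σ m * Vᵀ)
        - Matrix.diagonal dd * Uᵀ * (A - U * truncDiag σ m * Vᵀ)) ≤ ε * frobNorm (A * X)) :
    |Matrix.trace (Xᵀ * V * truncDiag σ m * Uᵀ * (Wᵀ * W - 1)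
        * U * (Matrix.diagonal σ - truncDiag σ m) * Vᵀ * X)|
      ≤ (dd ⟨m - 1, by omega⟩)⁻¹ * ε * frobNorm (A * X) ^ 2 := by
  have hmr : m ≤ r := le_trans hmq hqr
  set i0 : Fin r := ⟨m - 1, by omega⟩ with hi0
  have hdd0 : 0 < dd i0 := hdd_pos i0 (by simp [hi0]; omega)
  set Sg : Matrix (Fin r) (Fin r) ℝ := Matrix.diagonal σ with hSg
  set Tm : Matrix (Fin r) (Fin r) ℝ := truncDiag σ m with hTmdef
  set D : Matrix (Fin r) (Fin r) ℝ := Matrix.diagonal dd with hD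
  set c : Fin r → ℝ := fun i => if (i : ℕ) < m then σ i / dd i else 0 with hc
  set E : Matrix (Fin r) (Fin d) ℝ :=
    D * Uᵀ * Wᵀ * W * (A - U * Tm * Vᵀ) - D * Uᵀ * (A - U * Tm * Vᵀ) with hEdef
  -- C * D = Tm
  have hCD : Matrix.diagonal c * D = Tm := by
    rw [hD, hTmdef, Matrix.diagonal_mul_diagonal, truncDiag]
    refine congrArg Matrix.diagonal (funext fun i => ?_)
    by_cases h : (i : ℕ) < m
    · simp only [hc, if_pos h]
      exact div_mul_cancel₀ _ (ne_of_gt (hdd_pos i (by omega)))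
    · simp [hc, h]
  have hCDZ : ∀ (Z : Matrix (Fin r) (Fin (d - k)) ℝ),
      Matrix.diagonal c * (D * Z) = Tm * Z := fun Z => by
    rw [← Matrix.mul_assoc, hCD]
  have hUU : ∀ (Z : Matrix (Fin r) (Fin d) ℝ), Uᵀ * (U * Z) = Z := fun Z => by
    rw [← Matrix.mul_assoc, hU, Matrix.one_mul]
  have hAm : A - U * Tm * Vᵀ = U * ((Sg - Tm) * Vᵀ) := by
    rw [hA, Matrix.sub_mul, Matrix.mul_assoc, Matrix.mul_assoc, ← Matrix.mul_sub,
      ← Matrix.sub_mul]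
  -- key matrix identity
  have key : Xᵀ * V * Tm * Uᵀ * (Wᵀ * W - 1) * U * (Sg - Tm) * Vᵀ * X
      = (Matrix.diagonal c * (Vᵀ * X))ᵀ * (E * X) := by
    rw [hEdef, hAm]
    simp only [Matrix.transpose_mul, Matrix.transpose_transpose, Matrix.diagonal_transpose,
      Matrix.sub_mul, Matrix.mul_sub, Matrix.mul_one, Matrix.one_mul, Matrix.mul_assoc,
      hUU]
    simp only [hCDZ]
    abel
  rw [key]
  have bound1 : frobNorm (E * X) ≤ ε * frobNorm (A * X) := by
    refine le_trans ?_ h2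
    rw [frobNorm_eq, frobNorm_eq]
    exact Real.sqrt_le_sqrt (fro2_mul_orthocol E hX)
  -- bound on the left factor
  have bound2 : frobNorm (Matrix.diagonal c * (Vᵀ * X)) ≤ (dd i0)⁻¹ * frobNorm (A * X) := by
    have hAX : fro2 (A * X) = fro2 (Sg * (Vᵀ * X)) := by
      rw [hA, Matrix.mul_assoc, Matrix.mul_assoc, fro2_unitary_left hU, ← Matrix.mul_assoc]
    have hentry : fro2 (Matrix.diagonal c * (Vᵀ * X))
        ≤ ((dd i0)⁻¹) ^ 2 * fro2 (Sg * (Vᵀ * X)) := by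
      rw [fro2, fro2, Finset.mul_sum]
      refine Finset.sum_le_sum fun i _ => ?_
      rw [Finset.mul_sum]
      refine Finset.sum_le_sum fun j _ => ?_
      rw [Matrix.diagonal_mul, hSg, Matrix.diagonal_mul, mul_pow, mul_pow, ← mul_assoc]
      refine mul_le_mul_of_nonneg_right ?_ (sq_nonneg _)
      have hci : 0 ≤ c i ∧ c i ≤ (dd i0)⁻¹ * σ i := by
        constructor
        · by_cases h : (i : ℕ) < m
          · simp only [hc, h, if_true]
            exact div_nonneg (le_of_lt (hσpos i)) (le_of_lt (hdd_pos i (by omega)))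
          · simp [hc, h]
        · by_cases h : (i : ℕ) < m
          · simp only [hc, h, if_true]
            have hle : dd i0 ≤ dd i := hdd_dec i i0 (by simp [hi0, Fin.le_def]; omega)
            rw [div_eq_inv_mul]
            exact mul_le_mul_of_nonneg_right (by
              exact inv_anti₀ hdd0 hle) (le_of_lt (hσpos i))
          · simp only [hc, h, if_false]
            exact mul_nonneg (inv_nonneg.mpr hdd0.le) (hσpos i).le
      calc c i ^ 2 ≤ ((dd i0)⁻¹ * σ i) ^ 2 := by
            exact pow_le_pow_left₀ hci.1 hci.2 2
        _ = (dd i0)⁻¹ ^ 2 * σ i ^ 2 := by ring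
    rw [frobNorm_eq, frobNorm_eq, hAX]
    calc Real.sqrt (fro2 (Matrix.diagonal c * (Vᵀ * X)))
        ≤ Real.sqrt (((dd i0)⁻¹) ^ 2 * fro2 (Sg * (Vᵀ * X))) := Real.sqrt_le_sqrt hentry
      _ = (dd i0)⁻¹ * Real.sqrt (fro2 (Sg * (Vᵀ * X))) := by
          rw [Real.sqrt_mul (sq_nonneg _), Real.sqrt_sq (inv_nonneg.mpr hdd0.le)]
  have main := abs_trace_le (Matrix.diagonal c * (Vᵀ * X)) (E * X)
  have hnn : 0 ≤ (dd i0)⁻¹ * frobNorm (A * X) :=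
    mul_nonneg (inv_nonneg.mpr hdd0.le) (frobNorm_nonneg_s3 _)
  calc |Matrix.trace ((Matrix.diagonal c * (Vᵀ * X))ᵀ * (E * X))|
      ≤ frobNorm (Matrix.diagonal c * (Vᵀ * X)) * frobNorm (E * X) := main
    _ ≤ ((dd i0)⁻¹ * frobNorm (A * X)) * (ε * frobNorm (A * X)) :=
        mul_le_mul bound2 bound1 (frobNorm_nonneg_s3 _) hnn
    _ = (dd i0)⁻¹ * ε * frobNorm (A * X) ^ 2 := by ring
end

section
/- Let A ∈ ℝ^{m×n} and B ∈ ℝ^{n×p}, let p₁,…,p_n be strictly positive probabilities summing to one, and let W ∈ ℝ^{s×n} be the random sampling-and-rescaling matrix of Algorithm 1 built from these probabilities. Then E[‖A Wᵀ W B − A B‖_F²] ≤ Σ_{i=1}^{n} ‖A_{*i}‖₂² ‖B_{i*}‖₂² / (s p_i). -/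
open Matrix BigOperators

/-!
Entry `(a, b)` of `A Wᵀ W B` is a sum of `s` independent copies of `X = A a k * B k b / (s p k)`,
`k ~ p`, each with mean `(A B) a b / s`. Its expected squared deviation from `(A B) a b` is
therefore `s Var X ≤ s E[X²]`, and summing `s E[X²]` over all entries gives the bound.
-/

section ProductWeights

/-! Under the weights `∏ j, p (ω j)` the coordinates `ω j` are independent with law `p`. -/

variable {ι α : Type*} [Fintype ι] [DecidableEq ι] [Fintype α] (p : α → ℝ)

theorem sum_prod_weight_mul_prod (f : ι → α → ℝ) :
    ∑ ω : ι → α, (∏ j, p (ω j)) * ∏ j, f j (ω j) = ∏ j, ∑ k, p k * f j k := by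
  rw [Finset.prod_univ_sum, Fintype.piFinset_univ]
  simp only [Finset.prod_mul_distrib]

variable {p}

theorem sum_prod_weight_mul_apply (hp : ∑ k, p k = 1) (y : α → ℝ) (i : ι) :
    ∑ ω : ι → α, (∏ j, p (ω j)) * y (ω i) = ∑ k, p k * y k := by
  let f : ι → α → ℝ := fun j k => if j = i then y k else 1
  calc ∑ ω : ι → α, (∏ j, p (ω j)) * y (ω i)
      = ∑ ω : ι → α, (∏ j, p (ω j)) * ∏ j, f j (ω j) := by
        simp only [f, Finset.prod_ite_eq', Finset.mem_univ, if_true]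
    _ = ∏ j, ∑ k, p k * f j k := sum_prod_weight_mul_prod p f
    _ = ∑ k, p k * y k := by
        rw [Fintype.prod_eq_single i fun j hj => by simp [f, hj, hp]]
        simp [f]

theorem sum_prod_weight_mul_apply_mul_apply (hp : ∑ k, p k = 1) (y z : α → ℝ) {i i' : ι}
    (h : i ≠ i') :
    ∑ ω : ι → α, (∏ j, p (ω j)) * (y (ω i) * z (ω i')) =
      (∑ k, p k * y k) * ∑ k, p k * z k := by
  let f : ι → α → ℝ := fun j k => if j = i then y k else if j = i' then z k else 1
  calc ∑ ω : ι → α, (∏ j, p (ω j)) * (y (ω i) * z (ω i'))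
      = ∑ ω : ι → α, (∏ j, p (ω j)) * ∏ j, f j (ω j) := by
        refine Finset.sum_congr rfl fun ω _ => congrArg _ ?_
        rw [Fintype.prod_eq_mul (f := fun j => f j (ω j)) i i' h fun j hj => by
          simp [f, hj.1, hj.2]]
        simp [f, h.symm]
    _ = ∏ j, ∑ k, p k * f j k := sum_prod_weight_mul_prod p f
    _ = (∑ k, p k * y k) * ∑ k, p k * z k := by
        rw [Fintype.prod_eq_mul i i' h fun j hj => by simp [f, hj.1, hj.2, hp]]
        simp [f, h.symm]

theorem sum_prod_weight_mul_sq_sum_sub (hp : ∑ k, p k = 1) (y : α → ℝ) :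
    ∑ ω : ι → α, (∏ j, p (ω j)) * (∑ i, y (ω i) - Fintype.card ι * ∑ k, p k * y k) ^ 2 =
      Fintype.card ι * (∑ k, p k * y k ^ 2 - (∑ k, p k * y k) ^ 2) := by
  set μ := ∑ k, p k * y k
  have hcenter : ∑ k, p k * (y k - μ) = 0 := by
    simp only [mul_sub, Finset.sum_sub_distrib, ← Finset.sum_mul, hp, one_mul, sub_self, μ]
  have hvar : ∑ k, p k * (y k - μ) ^ 2 = ∑ k, p k * y k ^ 2 - μ ^ 2 := by
    have : ∀ k, p k * (y k - μ) ^ 2 = p k * y k ^ 2 - 2 * μ * (p k * y k) + μ ^ 2 * p k :=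
      fun k => by ring
    simp only [this, Finset.sum_add_distrib, Finset.sum_sub_distrib, ← Finset.mul_sum, hp]
    ring
  have hcross (i i' : ι) : ∑ ω : ι → α, (∏ j, p (ω j)) * ((y (ω i) - μ) * (y (ω i') - μ)) =
      if i = i' then ∑ k, p k * y k ^ 2 - μ ^ 2 else 0 := by
    split_ifs with h
    · subst h
      simpa only [← sq, ← hvar] using sum_prod_weight_mul_apply hp (fun k => (y k - μ) ^ 2) i
    · rw [sum_prod_weight_mul_apply_mul_apply hp (fun k => y k - μ) (fun k => y k - μ) h,
        hcenter, zero_mul]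
  calc ∑ ω : ι → α, (∏ j, p (ω j)) * (∑ i, y (ω i) - Fintype.card ι * μ) ^ 2
      = ∑ i, ∑ i', ∑ ω : ι → α, (∏ j, p (ω j)) * ((y (ω i) - μ) * (y (ω i') - μ)) := by
        have (ω : ι → α) : ∑ i, y (ω i) - Fintype.card ι * μ = ∑ i, (y (ω i) - μ) := by
          simp [Finset.sum_sub_distrib]
        simp_rw [this, sq, Finset.sum_mul_sum, Finset.mul_sum]
        rw [Finset.sum_comm]
        exact Finset.sum_congr rfl fun _ _ => Finset.sum_comm
    _ = Fintype.card ι * (∑ k, p k * y k ^ 2 - μ ^ 2) := by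
        simp only [hcross, Finset.sum_ite_eq, Finset.mem_univ, if_true, Finset.sum_const,
          Finset.card_univ, nsmul_eq_mul]

end ProductWeights

theorem frobNorm_sq_s5 {m n : Type*} [Fintype m] [Fintype n] (A : Matrix m n ℝ) :
    frobNorm A ^ 2 = ∑ i, ∑ j, A i j ^ 2 :=
  Real.sq_sqrt (by positivity)

theorem sum_sum_sum_sq_mul_sq_div {m n p' : Type*} [Fintype m] [Fintype n] [Fintype p']
    (A : Matrix m n ℝ) (B : Matrix n p' ℝ) (c : n → ℝ) :
    ∑ a, ∑ b, ∑ k, A a k ^ 2 * B k b ^ 2 / c k =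
      ∑ k, (∑ a, A a k ^ 2) * (∑ b, B k b ^ 2) / c k := by
  simp only [Finset.sum_mul, Finset.mul_sum, Finset.sum_div]
  rw [Finset.sum_comm]
  conv_rhs => rw [Finset.sum_comm]
  exact Finset.sum_congr rfl fun _ _ => Finset.sum_comm

theorem expec_sum {n s : ℕ} (p : Fin n → ℝ) {κ : Type*} (t : Finset κ)
    (f : κ → (Fin s → Fin n) → ℝ) :
    expec p (fun ω => ∑ a ∈ t, f a ω) = ∑ a ∈ t, expec p (f a) := by
  simp only [expec, Finset.mul_sum]
  exact Finset.sum_comm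

section SamplingMatrix

variable {m n p' s : ℕ} {p : Fin n → ℝ} (ω : Fin s → Fin n)

theorem mul_samplingMatrix_transpose_apply (A : Matrix (Fin m) (Fin n) ℝ) (a : Fin m)
    (i : Fin s) :
    (A * (samplingMatrix p s ω)ᵀ) a i = A a (ω i) / √(s * p (ω i)) := by
  simp [Matrix.mul_apply, samplingMatrix, div_eq_mul_inv]

theorem samplingMatrix_mul_apply (B : Matrix (Fin n) (Fin p') ℝ) (i : Fin s) (b : Fin p') :
    (samplingMatrix p s ω * B) i b = B (ω i) b / √(s * p (ω i)) := by
  simp [Matrix.mul_apply, samplingMatrix, div_eq_inv_mul]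

theorem mul_samplingMatrix_transpose_mul_samplingMatrix_mul_apply (hp : ∀ k, 0 ≤ p k)
    (A : Matrix (Fin m) (Fin n) ℝ) (B : Matrix (Fin n) (Fin p') ℝ) (a : Fin m) (b : Fin p') :
    (A * (samplingMatrix p s ω)ᵀ * samplingMatrix p s ω * B) a b =
      ∑ i, A a (ω i) * B (ω i) b / (s * p (ω i)) := by
  rw [Matrix.mul_assoc, Matrix.mul_apply]
  refine Finset.sum_congr rfl fun i _ => ?_
  rw [mul_samplingMatrix_transpose_apply, samplingMatrix_mul_apply, div_mul_div_comm,
    Real.mul_self_sqrt (by have := hp (ω i); positivity)]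

end SamplingMatrix

/-- expected squared Frobenius error of sampled matrix multiplication. -/
theorem stmt_5 {m n p' : ℕ} (s : ℕ) (hs : 0 < s)
    (A : Matrix (Fin m) (Fin n) ℝ) (B : Matrix (Fin n) (Fin p') ℝ)
    (p : Fin n → ℝ) (hp : ∀ i, 0 < p i) (hsum : ∑ i, p i = 1) :
    expec p (fun (ω : Fin s → Fin n) =>
      frobNorm (A * (samplingMatrix p s ω)ᵀ * samplingMatrix p s ω * B - A * B) ^ 2)
    ≤ ∑ i, (∑ j, (A j i) ^ 2) * (∑ j, (B i j) ^ 2) / (s * p i) := by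
  have hs' : (s : ℝ) ≠ 0 := by exact_mod_cast hs.ne'
  let y : Fin m → Fin p' → Fin n → ℝ := fun a b k => A a k * B k b / (s * p k)
  have hAB (a : Fin m) (b : Fin p') : (A * B) a b = s * ∑ k, p k * y a b k := by
    simp only [Matrix.mul_apply, Finset.mul_sum, y]
    exact Finset.sum_congr rfl fun k _ => by field_simp [(hp k).ne']
  have herr (ω : Fin s → Fin n) (a : Fin m) (b : Fin p') :
      (A * (samplingMatrix p s ω)ᵀ * samplingMatrix p s ω * B - A * B) a b =
        ∑ i, y a b (ω i) - s * ∑ k, p k * y a b k := by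
    rw [Matrix.sub_apply, mul_samplingMatrix_transpose_mul_samplingMatrix_mul_apply ω
      (fun k => (hp k).le), hAB]
  have hsq (a : Fin m) (b : Fin p') (k : Fin n) :
      s * (p k * y a b k ^ 2) = A a k ^ 2 * B k b ^ 2 / (s * p k) := by
    simp only [y]
    field_simp [(hp k).ne']
  calc expec p (fun ω =>
        frobNorm (A * (samplingMatrix p s ω)ᵀ * samplingMatrix p s ω * B - A * B) ^ 2)
      = ∑ a, ∑ b, expec p fun ω : Fin s → Fin n =>
          (∑ i, y a b (ω i) - s * ∑ k, p k * y a b k) ^ 2 := by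
        simp only [frobNorm_sq_s5, herr, expec_sum]
    _ ≤ ∑ a, ∑ b, s * ∑ k, p k * y a b k ^ 2 := by
        gcongr with a _ b _
        have hvar := sum_prod_weight_mul_sq_sum_sub (ι := Fin s) hsum (y a b)
        rw [Fintype.card_fin] at hvar
        rw [expec, hvar]
        exact mul_le_mul_of_nonneg_left (sub_le_self _ (sq_nonneg _)) (Nat.cast_nonneg s)
    _ = ∑ k, (∑ a, A a k ^ 2) * (∑ b, B k b ^ 2) / (s * p k) := by
        rw [← sum_sum_sum_sq_mul_sq_div]
        simp only [Finset.mul_sum, hsq]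
end

section
/- Let A ∈ ℝ^{n×d} have rank r with singular values σ₁ ≥ … ≥ σ_r > 0, let 1 ≤ k < r, and set λ = ‖A_{k,⊥}‖_F²/k where A_{k,⊥} = A − A_k. Then the sum of the ridge leverage scores satisfies d_λ = Σ_{i=1}^{r} σ_i²/(σ_i² + λ) ≤ 2k. -/
open Matrix BigOperators

/-- the sum of ridge leverage scores with λ = ‖A_{k,⊥}‖_F²/k is at most 2k. -/
theorem stmt_14 {n d r : ℕ} {k : ℕ}
    (A : Matrix (Fin n) (Fin d) ℝ)
    (U : Matrix (Fin n) (Fin r) ℝ) (V : Matrix (Fin d) (Fin r) ℝ) (σ : Fin r → ℝ)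
    (hU : Uᵀ * U = 1) (hV : Vᵀ * V = 1)
    (hσdec : ∀ i j : Fin r, i ≤ j → σ j ≤ σ i) (hσpos : ∀ i, 0 < σ i)
    (hA : A = U * Matrix.diagonal σ * Vᵀ) (hrank : A.rank = r)
    (hk1 : 1 ≤ k) (hkr : k < r)
    (lam : ℝ) (hlam : lam = frobNorm (A - U * truncDiag σ k * Vᵀ) ^ 2 / k) :
    ∑ i, σ i ^ 2 / (σ i ^ 2 + lam) ≤ 2 * k := by
    classical
  set τ : Fin r → ℝ := fun i => if (i:ℕ) < k then 0 else σ i with hτ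
  have hB : A - U * truncDiag σ k * Vᵀ = U * Matrix.diagonal τ * Vᵀ := by
    have hd : Matrix.diagonal σ - Matrix.diagonal (fun i : Fin r => if (i:ℕ) < k then σ i else 0)
        = Matrix.diagonal τ := by
      ext i j
      by_cases h : i = j
      · subst h; by_cases h2 : (i:ℕ) < k <;> simp [Matrix.diagonal, hτ, h2]
      · simp [Matrix.diagonal, h]
    rw [hA, truncDiag, ← Matrix.sub_mul, ← Matrix.mul_sub, hd]
  set B := U * Matrix.diagonal τ * Vᵀ with hBdef
  set S : ℝ := ∑ i, τ i ^ 2 with hSdef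
  have hSval : frobNorm B ^ 2 = S := by
    have h0 : (0:ℝ) ≤ ∑ i, ∑ j, (B i j) ^ 2 := by positivity
    rw [frobNorm, Real.sq_sqrt h0]
    have h1 : ∑ i, ∑ j, (B i j)^2 = Matrix.trace (Bᵀ * B) := by
      rw [Matrix.trace]
      simp only [Matrix.diag, Matrix.mul_apply, Matrix.transpose_apply, sq]
      exact Finset.sum_comm
    have h2 : Bᵀ * B = V * Matrix.diagonal (fun i => τ i * τ i) * Vᵀ := by
      rw [hBdef]
      simp only [Matrix.transpose_mul, Matrix.transpose_transpose, Matrix.diagonal_transpose]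
      calc V * (Matrix.diagonal τ * Uᵀ) * (U * Matrix.diagonal τ * Vᵀ)
          = V * (Matrix.diagonal τ * ((Uᵀ * U) * (Matrix.diagonal τ * Vᵀ))) := by
            simp only [Matrix.mul_assoc]
        _ = V * (Matrix.diagonal τ * (Matrix.diagonal τ * Vᵀ)) := by
            rw [hU, Matrix.one_mul]
        _ = V * Matrix.diagonal (fun i => τ i * τ i) * Vᵀ := by
            rw [← Matrix.diagonal_mul_diagonal]
            simp only [Matrix.mul_assoc]
    have h3 : Matrix.trace (V * Matrix.diagonal (fun i => τ i * τ i) * Vᵀ) = S := by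
      rw [Matrix.mul_assoc, Matrix.trace_mul_comm, Matrix.mul_assoc, hV, Matrix.mul_one,
        Matrix.trace_diagonal]
      simp [hSdef, sq]
    rw [h1, h2, h3]
  have hlam' : lam = S / k := by rw [hlam, hB, hSval]
  have hkpos : (0:ℝ) < k := by exact_mod_cast hk1
  have hSpos : 0 < S := by
    have hi0 : ¬ (r - 1 < k) := by omega
    have h1 : τ ⟨r-1, by omega⟩ ^ 2 ≤ S :=
      Finset.single_le_sum (f := fun i => τ i ^ 2) (fun i _ => sq_nonneg _) (Finset.mem_univ _)
    have h2 : τ ⟨r-1, by omega⟩ = σ ⟨r-1, by omega⟩ := by simp [hτ, hi0]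
    nlinarith [hσpos ⟨r-1, by omega⟩]
  have hlampos : 0 < lam := hlam' ▸ div_pos hSpos hkpos
  have hbound : ∀ i : Fin r, σ i ^ 2 / (σ i ^ 2 + lam)
      ≤ (if (i:ℕ) < k then (1:ℝ) else 0) + (if (i:ℕ) < k then 0 else σ i ^ 2 / lam) := by
    intro i
    by_cases h : (i:ℕ) < k
    · simp only [h, if_true, add_zero]
      exact div_le_one_of_le₀ (by nlinarith) (by positivity)
    · simp only [h, if_false, zero_add]
      exact div_le_div_of_nonneg_left (sq_nonneg _) hlampos (by nlinarith [sq_nonneg (σ i)])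
  have hS0 : S ≠ 0 := ne_of_gt hSpos
  have hk0 : (k:ℝ) ≠ 0 := ne_of_gt hkpos
  calc ∑ i, σ i ^ 2 / (σ i ^ 2 + lam)
      ≤ ∑ i : Fin r, ((if (i:ℕ) < k then (1:ℝ) else 0) + (if (i:ℕ) < k then 0 else σ i ^ 2 / lam)) :=
        Finset.sum_le_sum fun i _ => hbound i
    _ = (∑ i : Fin r, if (i:ℕ) < k then (1:ℝ) else 0)
        + (∑ i : Fin r, if (i:ℕ) < k then (0:ℝ) else σ i ^ 2) / lam := by
        rw [Finset.sum_add_distrib, Finset.sum_div]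
        congr 1
        exact Finset.sum_congr rfl fun i _ => by by_cases h : (i:ℕ) < k <;> simp [h]
    _ = k + S / lam := by
        congr 1
        · rw [Fin.sum_univ_eq_sum_range (fun i => if i < k then (1:ℝ) else 0),
            Finset.sum_ite, Finset.sum_const, Finset.sum_const]
          have : Finset.filter (fun x => x < k) (Finset.range r) = Finset.range k := by
            ext x; simp; omega
          simp [this]
        · congr 1
          rw [hSdef]
          exact Finset.sum_congr rfl fun i _ => by by_cases h : (i:ℕ) < k <;> simp [hτ, h]
    _ = 2 * k := by rw [hlam']; field_simp; ring
end
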